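/- Let θ0 ∈ (0, 1/10), let D be an even positive integer with D > 4·|log θ0|, and let λ > 1 be real. Then for every α > 0: |C_D(λ)| ≤ 2/(π·λ·θ0·|log θ0|) + α + 4πλ·θ0^α/D. -/

import Mathlib

open Real Filter Finset

/-- Averaged RoPE cosine sum: `C_D(λ) = (1/D) Σ_{d=0}^{D/2-1} cos(2πλ θ0^{2d/D})`. -/
noncomputable def ropeC (D : ℕ) (θ0 lam : ℝ) : ℝ :=
  (1 / (D : ℝ)) * ∑ d ∈ Finset.range (D / 2),
    Real.cos (2 * Real.pi * lam * θ0 ^ ((2 * (d : ℝ)) / (D : ℝ)))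

/-- Averaged RoPE sine sum: `S_D(λ) = (1/D) Σ_{d=0}^{D/2-1} sin(2πλ θ0^{2d/D})`. -/
noncomputable def ropeS (D : ℕ) (θ0 lam : ℝ) : ℝ :=
  (1 / (D : ℝ)) * ∑ d ∈ Finset.range (D / 2),
    Real.sin (2 * Real.pi * lam * θ0 ^ ((2 * (d : ℝ)) / (D : ℝ)))



lemma aux_cos_lip (a b : ℝ) : |Real.cos a - Real.cos b| ≤ |a - b| := by
  rw [Real.cos_sub_cos]
  rw [abs_mul, abs_mul]
  have h1 : |Real.sin ((a+b)/2)| ≤ 1 := Real.abs_sin_le_one ((a+b)/2)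
  have h2 : |Real.sin ((a-b)/2)| ≤ |(a-b)/2| := Real.abs_sin_le_abs
  calc |(-2 : ℝ)| * |Real.sin ((a+b)/2)| * |Real.sin ((a-b)/2)|
      ≤ 2 * 1 * |(a-b)/2| := by
        apply mul_le_mul _ h2 (abs_nonneg _) (by norm_num)
        apply mul_le_mul (le_of_eq (by simp [abs_of_nonneg])) h1 (abs_nonneg _) (by norm_num)
    _ = 2 * 1 * (|a - b| / 2) := by rw [abs_div]; norm_num
    _ = |a - b| := by ring

-- pointwise bound
lemma aux_pw (K c a x : ℝ) (hK : 0 ≤ K) (hc : c ≤ 0) (hax : a ≤ x) :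
    |Real.cos (K * Real.exp (c*a)) - Real.cos (K * Real.exp (c*x))| ≤
      K * (-c) * Real.exp (c*a) * (x - a) := by
  calc |Real.cos (K * Real.exp (c*a)) - Real.cos (K * Real.exp (c*x))|
      ≤ |K * Real.exp (c*a) - K * Real.exp (c*x)| := aux_cos_lip _ _
    _ = K * (Real.exp (c*a) - Real.exp (c*x)) := by
        rw [abs_of_nonneg]
        · ring
        · have : Real.exp (c*x) ≤ Real.exp (c*a) := by
            apply Real.exp_le_exp.2
            nlinarith
          nlinarith
    _ ≤ K * (-c) * Real.exp (c*a) * (x - a) := by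
        have key : Real.exp (c*a) - Real.exp (c*x) ≤ (-c) * Real.exp (c*a) * (x - a) := by
          have h1 : Real.exp (c*x) = Real.exp (c*a) * Real.exp (c*(x-a)) := by
            rw [← Real.exp_add]; ring_nf
          have h2 : 1 + c*(x-a) ≤ Real.exp (c*(x-a)) := by
            linarith [Real.add_one_le_exp (c*(x-a))]
          have hea : (0:ℝ) < Real.exp (c*a) := Real.exp_pos _
          rw [h1]
          nlinarith
        nlinarith [Real.exp_pos (c*a), Real.exp_pos (c*x)]

lemma aux_cont (K c : ℝ) : Continuous (fun x : ℝ => Real.cos (K * Real.exp (c*x))) := by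
  continuity

lemma aux_int_linear (C a b : ℝ) (hab : a ≤ b) :
    ∫ x in a..b, C * (x - a) = C * (b-a)^2 / 2 := by
  have : ∫ x in a..b, C * (x - a) = C * ∫ x in a..b, (x - a) := by
    rw [intervalIntegral.integral_const_mul]
  rw [this]
  have h2 : ∫ x in a..b, (x - a) = (b-a)^2/2 := by
    have := intervalIntegral.integral_comp_sub_right (a := a) (b := b) (fun x => x) a
    rw [this]
    simp [integral_id]
  rw [h2]; ring

-- fine interval bound
lemma aux_fine (K c a b : ℝ) (hK : 0 ≤ K) (hc : c ≤ 0) (hab : a ≤ b) :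
    |∫ x in a..b, (Real.cos (K * Real.exp (c*a)) - Real.cos (K * Real.exp (c*x)))| ≤
      K * (-c) * Real.exp (c*a) * (b-a)^2 / 2 := by
  have hcont : Continuous (fun x : ℝ => Real.cos (K * Real.exp (c*a)) - Real.cos (K * Real.exp (c*x))) := by
    continuity
  calc |∫ x in a..b, (Real.cos (K * Real.exp (c*a)) - Real.cos (K * Real.exp (c*x)))|
      ≤ ∫ x in a..b, |Real.cos (K * Real.exp (c*a)) - Real.cos (K * Real.exp (c*x))| :=
        intervalIntegral.abs_integral_le_integral_abs hab
    _ ≤ ∫ x in a..b, (K * (-c) * Real.exp (c*a)) * (x - a) := by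
        apply intervalIntegral.integral_mono_on hab
        · exact (hcont.abs).intervalIntegrable a b
        · exact (Continuous.intervalIntegrable (by continuity) a b)
        · intro x hx
          have := aux_pw K c a x hK hc hx.1
          linarith [this]
    _ = K * (-c) * Real.exp (c*a) * (b-a)^2 / 2 := by
        rw [aux_int_linear _ _ _ hab]

-- trivial interval bound
lemma aux_triv (K c a b : ℝ) (hab : a ≤ b) :
    |∫ x in a..b, (Real.cos (K * Real.exp (c*a)) - Real.cos (K * Real.exp (c*x)))| ≤
      2 * (b - a) := by
  have h := intervalIntegral.norm_integral_le_of_norm_le_const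
    (C := 2) (f := fun x => Real.cos (K * Real.exp (c*a)) - Real.cos (K * Real.exp (c*x)))
    (a := a) (b := b) ?_
  · rw [abs_of_nonneg (by linarith)] at h
    exact h
  · intro x hx
    have h1 := Real.neg_one_le_cos (K * Real.exp (c*a))
    have h2 := Real.neg_one_le_cos (K * Real.exp (c*x))
    have h3 := Real.cos_le_one (K * Real.exp (c*a))
    have h4 := Real.cos_le_one (K * Real.exp (c*x))
    rw [Real.norm_eq_abs, abs_le]
    constructor <;> linarith

lemma aux_exp_integral (b : ℝ) (hb : b ≠ 0) :
    ∫ x in (0:ℝ)..1, Real.exp (b*x) = (Real.exp b - 1)/b := by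
  have h : ∀ x ∈ Set.uIcc (0:ℝ) 1, HasDerivAt (fun x => Real.exp (b*x)/b) (Real.exp (b*x)) x := by
    intro x _
    have h1 : HasDerivAt (fun x : ℝ => b*x) b x := by
      simpa using (hasDerivAt_id x).const_mul b
    have h2 := h1.exp
    have h3 := h2.div_const b
    simpa [mul_div_assoc, mul_comm, mul_div_cancel_left₀ _ hb] using h3
  rw [intervalIntegral.integral_eq_sub_of_hasDerivAt h
    ((Continuous.intervalIntegrable (by continuity) 0 1))]
  simp
  field_simp

lemma aux_g_deriv (K c x : ℝ) (hK : 0 < K) (hc : c < 0) :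
    HasDerivAt (fun x => Real.sin (K * Real.exp (c*x)) / (K * c * Real.exp (c*x)))
      (Real.cos (K * Real.exp (c*x)) - Real.sin (K * Real.exp (c*x)) / (K * Real.exp (c*x))) x := by
  have hu : HasDerivAt (fun x : ℝ => Real.exp (c*x)) (c * Real.exp (c*x)) x := by
    have h1 : HasDerivAt (fun x : ℝ => c*x) c x := by
      simpa using (hasDerivAt_id x).const_mul c
    simpa [mul_comm] using h1.exp
  have hn : HasDerivAt (fun x => Real.sin (K * Real.exp (c*x)))
      (Real.cos (K * Real.exp (c*x)) * (K * (c * Real.exp (c*x)))) x := by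
    exact (hu.const_mul K).sin
  have hd : HasDerivAt (fun x => K * c * Real.exp (c*x)) (K * c * (c * Real.exp (c*x))) x :=
    hu.const_mul (K*c)
  have hden : K * c * Real.exp (c*x) ≠ 0 := by
    have := Real.exp_pos (c*x)
    intro h
    have : K * c ≠ 0 := mul_ne_zero (ne_of_gt hK) (ne_of_lt hc)
    exact absurd h (mul_ne_zero this (ne_of_gt (Real.exp_pos _)))
  have := hn.div hd hden
  refine this.congr_deriv ?_
  have he : (0:ℝ) < Real.exp (c*x) := Real.exp_pos _
  have hc0 : c ≠ 0 := ne_of_lt hc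
  field_simp


lemma aux_osc (K L : ℝ) (hK : 0 < K) (hL : 0 < L) :
    |∫ x in (0:ℝ)..1, Real.cos (K * Real.exp (-L*x))| ≤ 3 * Real.exp L / (K * L) := by
  have hcont1 : Continuous fun x : ℝ => Real.cos (K * Real.exp (-L*x)) := by continuity
  have hcont2 : Continuous fun x : ℝ => Real.sin (K * Real.exp (-L*x)) / (K * Real.exp (-L*x)) := by
    apply Continuous.div (by continuity) (by continuity)
    intro x
    exact ne_of_gt (by positivity)
  have hsub : ∫ x in (0:ℝ)..1,
      (Real.cos (K * Real.exp (-L*x)) - Real.sin (K * Real.exp (-L*x))/(K * Real.exp (-L*x))) =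
      Real.sin (K * Real.exp (-L*1))/(K*(-L)*Real.exp (-L*1)) -
      Real.sin (K * Real.exp (-L*0))/(K*(-L)*Real.exp (-L*0)) := by
    exact intervalIntegral.integral_eq_sub_of_hasDerivAt
      (f := fun x => Real.sin (K*Real.exp (-L*x))/(K*(-L)*Real.exp (-L*x)))
      (fun x _ => aux_g_deriv K (-L) x hK (by linarith))
      ((hcont1.sub hcont2).intervalIntegrable 0 1)
  have hint : ∫ x in (0:ℝ)..1, Real.cos (K * Real.exp (-L*x)) =
      (Real.sin (K * Real.exp (-L*1))/(K*(-L)*Real.exp (-L*1)) -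
       Real.sin (K * Real.exp (-L*0))/(K*(-L)*Real.exp (-L*0))) +
      ∫ x in (0:ℝ)..1, Real.sin (K * Real.exp (-L*x))/(K * Real.exp (-L*x)) := by
    rw [intervalIntegral.integral_sub (hcont1.intervalIntegrable 0 1)
      (hcont2.intervalIntegrable 0 1)] at hsub
    linarith
  have hKc : 0 < K * L := by positivity
  have hs : |∫ x in (0:ℝ)..1, Real.sin (K * Real.exp (-L*x))/(K * Real.exp (-L*x))| ≤
      (Real.exp L - 1)/(K*L) := by
    calc |∫ x in (0:ℝ)..1, Real.sin (K * Real.exp (-L*x))/(K * Real.exp (-L*x))|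
        ≤ ∫ x in (0:ℝ)..1, |Real.sin (K * Real.exp (-L*x))/(K * Real.exp (-L*x))| :=
          intervalIntegral.abs_integral_le_integral_abs zero_le_one
      _ ≤ ∫ x in (0:ℝ)..1, Real.exp (L*x)/K := by
          apply intervalIntegral.integral_mono_on zero_le_one
            (hcont2.abs.intervalIntegrable 0 1)
            (Continuous.intervalIntegrable (by continuity) 0 1)
          intro x _
          rw [abs_div]
          have he : (0:ℝ) < Real.exp (-L*x) := Real.exp_pos _
          have hd : |K * Real.exp (-L*x)| = K * Real.exp (-L*x) := abs_of_pos (by positivity)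
          rw [hd]
          have h1 : |Real.sin (K * Real.exp (-L*x))| ≤ 1 := Real.abs_sin_le_one _
          have hmul : Real.exp (L*x) * Real.exp (-L*x) = 1 := by
            rw [← Real.exp_add, show L*x + -L*x = 0 by ring, Real.exp_zero]
          have h2 : Real.exp (L*x)/K = 1 / (K * Real.exp (-L*x)) := by
            rw [div_eq_div_iff (ne_of_gt hK) (ne_of_gt (by positivity))]
            linear_combination K * hmul
          rw [h2]
          gcongr
      _ = (Real.exp L - 1)/(K*L) := by
          rw [intervalIntegral.integral_div, aux_exp_integral L (ne_of_gt hL)]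
          rw [div_div, mul_comm L K]
  have hg1 : |Real.sin (K * Real.exp (-L*1))/(K*(-L)*Real.exp (-L*1))| ≤ Real.exp L/(K*L) := by
    rw [abs_div]
    have hd : |K*(-L)*Real.exp (-L*1)| = K*L*Real.exp (-L*1) := by
      rw [abs_of_neg (by nlinarith [Real.exp_pos ((-L)*1)])]; ring
    rw [hd]
    have h1 : |Real.sin (K * Real.exp (-L*1))| ≤ 1 := Real.abs_sin_le_one _
    calc |Real.sin (K * Real.exp (-L*1))| / (K*L*Real.exp (-L*1))
        ≤ 1 / (K*L*Real.exp (-L*1)) := by gcongr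
      _ = Real.exp L/(K*L) := by
          have hmul : Real.exp L * Real.exp (-L*1) = 1 := by
            rw [← Real.exp_add, show L + -L*1 = 0 by ring, Real.exp_zero]
          rw [div_eq_div_iff (by positivity) (ne_of_gt hKc)]
          rw [show (-L*1 : ℝ) = -L by ring] at hmul ⊢
          linear_combination (-(K*L)) * hmul
  have hg0 : |Real.sin (K * Real.exp (-L*0))/(K*(-L)*Real.exp (-L*0))| ≤ 1/(K*L) := by
    rw [abs_div]
    have hd : |K*(-L)*Real.exp (-L*0)| = K*L := by
      simp only [neg_mul, mul_zero, neg_zero, Real.exp_zero, mul_one]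
      rw [abs_of_neg (by nlinarith)]; ring
    rw [hd]
    gcongr
    exact Real.abs_sin_le_one _
  have hexpc : (1:ℝ) ≤ Real.exp L := by
    rw [Real.one_le_exp_iff]; linarith
  calc |∫ x in (0:ℝ)..1, Real.cos (K * Real.exp (-L*x))|
      ≤ |Real.sin (K * Real.exp (-L*1))/(K*(-L)*Real.exp (-L*1))| +
        |Real.sin (K * Real.exp (-L*0))/(K*(-L)*Real.exp (-L*0))| +
        |∫ x in (0:ℝ)..1, Real.sin (K * Real.exp (-L*x))/(K * Real.exp (-L*x))| := by
        rw [hint]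
        exact (abs_add_le _ _).trans (add_le_add_left (abs_sub _ _) _)
    _ ≤ Real.exp L/(K*L) + 1/(K*L) + (Real.exp L - 1)/(K*L) := by
        gcongr
    _ ≤ 3 * Real.exp L / (K * L) := by
        rw [← add_div, ← add_div]
        gcongr
        linarith

lemma aux_one_sub_exp (t : ℝ) (ht0 : 0 < t) (ht1 : t < 1/2) : t/2 ≤ 1 - Real.exp (-t) := by
  have h1 : Real.exp (-t) ≤ 1/(1+t) := by
    rw [Real.exp_neg, inv_eq_one_div]
    apply one_div_le_one_div_of_le (by linarith)
    linarith [Real.add_one_le_exp t]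
  have h2 : 1/(1+t) ≤ 1 - t/2 := by
    rw [div_le_iff₀ (by linarith)]
    nlinarith
  linarith

set_option maxHeartbeats 2000000 in
/-- Lemma D.1 (upper_lemma), first inequality: upper bound on `|C_D(λ)|`. -/
theorem stmt5 (θ0 : ℝ) (hθ0 : θ0 ∈ Set.Ioo (0 : ℝ) (1 / 10))
    (D : ℕ) (hDeven : Even D) (hD : (D : ℝ) > 4 * |Real.log θ0|)
    (lam : ℝ) (hlam : 1 < lam) (α : ℝ) (hα : 0 < α) :
    |ropeC D θ0 lam| ≤ 2 / (Real.pi * lam * θ0 * |Real.log θ0|) +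
      (α + 4 * Real.pi * lam * θ0 ^ α / D) := by
  obtain ⟨hθp, hθlt⟩ := hθ0
  have hθ1 : θ0 < 1 := by linarith
  have hlog : Real.log θ0 < 0 := Real.log_neg hθp hθ1
  have hlam0 : 0 < lam := by linarith
  have hpi := Real.pi_pos
  rw [show |Real.log θ0| = -Real.log θ0 from abs_of_neg hlog] at hD ⊢
  rw [Real.rpow_def_of_pos hθp α]
  set c : ℝ := Real.log θ0 with hcdef
  set L : ℝ := -c with hLdef
  have hLpos : 0 < L := by rw [hLdef]; linarith
  set K : ℝ := 2 * Real.pi * lam with hKdef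
  have hKpos : 0 < K := by rw [hKdef]; positivity
  obtain ⟨N, hDN⟩ := hDeven
  have hDN2 : D = 2 * N := by omega
  have hDRpos : (0:ℝ) < D := lt_of_le_of_lt (by positivity) hD
  have hDpos : 0 < D := by exact_mod_cast hDRpos
  have hNpos : 0 < N := by omega
  have hNR : (0:ℝ) < N := by exact_mod_cast hNpos
  have hNne : (N:ℝ) ≠ 0 := ne_of_gt hNR
  have hDR : (D:ℝ) = 2 * N := by exact_mod_cast hDN2
  have hLN : L / N < 1 / 2 := by
    rw [div_lt_iff₀ hNR]
    nlinarith [hD, hDR]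
  have hrpow : ∀ y : ℝ, θ0 ^ y = Real.exp (c * y) := fun y => Real.rpow_def_of_pos hθp y
  have hrope : ropeC D θ0 lam =
      (1 / (D:ℝ)) * ∑ d ∈ Finset.range N, Real.cos (K * Real.exp (c * ((d:ℝ)/(N:ℝ)))) := by
    unfold ropeC
    congr 1
    rw [hDN2, Nat.mul_div_cancel_left N (by norm_num)]
    apply Finset.sum_congr rfl
    intro d _
    rw [hrpow]
    congr 2
    push_cast
    rw [mul_div_mul_left _ _ (two_ne_zero)]
  set f : ℝ → ℝ := fun x => Real.cos (K * Real.exp (c * x)) with hfdef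
  have hosc : |∫ x in (0:ℝ)..1, f x| ≤ 3 * Real.exp L / (K * L) := by
    have := aux_osc K L hKpos hLpos
    have hfeq : ∀ x : ℝ, f x = Real.cos (K * Real.exp (-L * x)) := by
      intro x; rw [hfdef]; simp [hLdef]
    simp only [hfeq]
    exact this
  have hfc : Continuous f := aux_cont K c
  have hadj : ∑ k ∈ Finset.range N, (∫ x in ((k:ℝ)/(N:ℝ))..(((k:ℝ)+1)/(N:ℝ)), f x)
      = ∫ x in (0:ℝ)..1, f x := by
    have h := intervalIntegral.sum_integral_adjacent_intervals
      (a := fun k : ℕ => (k:ℝ)/(N:ℝ)) (n := N) (f := f) (μ := MeasureTheory.volume)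
      (fun k _ => hfc.intervalIntegrable _ _)
    simp only [Nat.cast_zero, Nat.cast_add, Nat.cast_one] at h
    rw [zero_div, div_self hNne] at h
    exact h
  have hstep : ∀ k : ℕ, ((k:ℝ)+1)/(N:ℝ) - (k:ℝ)/(N:ℝ) = 1/(N:ℝ) := by
    intro k; field_simp; ring
  have hle : ∀ k : ℕ, (k:ℝ)/(N:ℝ) ≤ ((k:ℝ)+1)/(N:ℝ) := by
    intro k
    gcongr
    linarith
  have hdiff : ropeC D θ0 lam - (1/2) * ∫ x in (0:ℝ)..1, f x
      = (1/2) * ∑ k ∈ Finset.range N,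
          (∫ x in ((k:ℝ)/(N:ℝ))..(((k:ℝ)+1)/(N:ℝ)), (f ((k:ℝ)/(N:ℝ)) - f x)) := by
    rw [hrope, ← hadj, Finset.mul_sum, Finset.mul_sum, Finset.mul_sum, ← Finset.sum_sub_distrib]
    apply Finset.sum_congr rfl
    intro k _
    rw [intervalIntegral.integral_sub intervalIntegrable_const (hfc.intervalIntegrable _ _),
        intervalIntegral.integral_const, smul_eq_mul, hstep k, hDR]
    ring
  have htriv : ∀ k : ℕ,
      |∫ x in ((k:ℝ)/(N:ℝ))..(((k:ℝ)+1)/(N:ℝ)), (f ((k:ℝ)/(N:ℝ)) - f x)| ≤ 2/(N:ℝ) := by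
    intro k
    have h := aux_triv K c ((k:ℝ)/(N:ℝ)) (((k:ℝ)+1)/(N:ℝ)) (hle k)
    rw [hstep k] at h
    calc _ ≤ 2 * (1/(N:ℝ)) := h
      _ = 2/(N:ℝ) := by ring
  set r : ℝ := Real.exp (Real.log θ0 / (N:ℝ)) with hrdef
  have hr0 : 0 < r := Real.exp_pos _
  have hr1 : r < 1 := by
    rw [hrdef]
    apply Real.exp_lt_one_iff.2
    apply div_neg_of_neg_of_pos hlog hNR
  have hfine : ∀ k : ℕ,
      |∫ x in ((k:ℝ)/(N:ℝ))..(((k:ℝ)+1)/(N:ℝ)), (f ((k:ℝ)/(N:ℝ)) - f x)|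
        ≤ (K * L / (2 * (N:ℝ)^2)) * r^k := by
    intro k
    have h := aux_fine K c ((k:ℝ)/(N:ℝ)) (((k:ℝ)+1)/(N:ℝ)) (le_of_lt hKpos) (le_of_lt hlog) (hle k)
    rw [hstep k] at h
    have hek : Real.exp (c * ((k:ℝ)/(N:ℝ))) = r^k := by
      rw [hrdef, ← Real.exp_nat_mul, hcdef]
      congr 1
      field_simp
    calc _ ≤ K * (-c) * Real.exp (c * ((k:ℝ)/(N:ℝ))) * (1/(N:ℝ))^2/2 := h
      _ = (K * L / (2 * (N:ℝ)^2)) * r^k := by rw [hek, hLdef]; ring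
  clear_value c L K f r
  set m : ℕ := ⌊α * (N:ℝ)⌋₊ with hmdef
  have hmfloor : (m:ℝ) ≤ α * N := by rw [hmdef]; exact Nat.floor_le (by positivity)
  have hmsucc : α * (N:ℝ) < (m:ℝ) + 1 := by rw [hmdef]; exact Nat.lt_floor_add_one _
  clear_value m
  have hpos1 : 0 < 2 / (Real.pi * lam * θ0 * L) :=
    div_pos two_pos (mul_pos (mul_pos (mul_pos hpi hlam0) hθp) hLpos)
  have hpos2 : 0 ≤ 4 * Real.pi * lam * Real.exp (c * α) / D :=
    le_of_lt (div_pos (mul_pos (mul_pos (mul_pos (by norm_num) hpi) hlam0) (Real.exp_pos _))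
      hDRpos)
  by_cases hmN : N ≤ m
  · -- α ≥ 1, trivial bound suffices
    have hα1 : 1 ≤ α := by
      have h1 : (N:ℝ) ≤ m := by exact_mod_cast hmN
      nlinarith
    have htr : |ropeC D θ0 lam| ≤ 1/2 := by
      rw [hrope, abs_mul]
      calc |1/(D:ℝ)| * |∑ d ∈ Finset.range N, Real.cos (K * Real.exp (c * ((d:ℝ)/(N:ℝ))))|
          ≤ (1/(D:ℝ)) * (N:ℝ) := by
            apply mul_le_mul
            · rw [abs_of_pos (by positivity)]
            · calc |∑ d ∈ Finset.range N, Real.cos (K * Real.exp (c * ((d:ℝ)/(N:ℝ))))|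
                  ≤ ∑ d ∈ Finset.range N, |Real.cos (K * Real.exp (c * ((d:ℝ)/(N:ℝ))))| :=
                    Finset.abs_sum_le_sum_abs _ _
                _ ≤ ∑ _d ∈ Finset.range N, (1:ℝ) := by
                    apply Finset.sum_le_sum
                    intro i _
                    exact Real.abs_cos_le_one _
                _ = (N:ℝ) := by simp
            · exact abs_nonneg _
            · positivity
        _ = 1/2 := by rw [hDR]; field_simp
    linarith
  · push_neg at hmN
    have hsplit : ∑ k ∈ Finset.range N,
        |∫ x in ((k:ℝ)/(N:ℝ))..(((k:ℝ)+1)/(N:ℝ)), (f ((k:ℝ)/(N:ℝ)) - f x)|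
        = (∑ k ∈ Finset.Ico 0 m, |∫ x in ((k:ℝ)/(N:ℝ))..(((k:ℝ)+1)/(N:ℝ)), (f ((k:ℝ)/(N:ℝ)) - f x)|)
        + ∑ k ∈ Finset.Ico m N, |∫ x in ((k:ℝ)/(N:ℝ))..(((k:ℝ)+1)/(N:ℝ)), (f ((k:ℝ)/(N:ℝ)) - f x)| := by
      rw [Finset.range_eq_Ico,
        ← Finset.sum_Ico_consecutive _ (Nat.zero_le m) (le_of_lt hmN)]
    have hS1 : ∑ k ∈ Finset.Ico 0 m, |∫ x in ((k:ℝ)/(N:ℝ))..(((k:ℝ)+1)/(N:ℝ)), (f ((k:ℝ)/(N:ℝ)) - f x)|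
        ≤ (m:ℝ) * (2/(N:ℝ)) := by
      calc _ ≤ ∑ _k ∈ Finset.Ico 0 m, (2/(N:ℝ)) := Finset.sum_le_sum (fun k _ => htriv k)
        _ = (m:ℝ) * (2/(N:ℝ)) := by simp [Finset.sum_const]
    have hLN2 : 0 < L/(N:ℝ) := div_pos hLpos hNR
    have hLN2' : 0 < L/(2*(N:ℝ)) := by
      have he : L/(2*(N:ℝ)) = (L/(N:ℝ))/2 := by ring
      rw [he]; linarith
    have h1r : L/(2*(N:ℝ)) ≤ 1 - r := by
      have hrr : r = Real.exp (-(L/(N:ℝ))) := by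
        rw [hrdef]
        congr 1
        rw [hLdef, hcdef]
        ring
      have hkey := aux_one_sub_exp (L/(N:ℝ)) hLN2 hLN
      rw [hrr]
      calc L/(2*(N:ℝ)) = (L/(N:ℝ))/2 := by ring
        _ ≤ 1 - Real.exp (-(L/(N:ℝ))) := hkey
    have hden : 0 < 1 - r := lt_of_lt_of_le hLN2' h1r
    have hgeom : ∑ k ∈ Finset.Ico m N, r^k ≤ r^m * (2*(N:ℝ)/L) := by
      rw [geom_sum_Ico (ne_of_lt hr1) (le_of_lt hmN)]
      have e1 : (r^N - r^m)/(r-1) = (r^m - r^N)/(1-r) := by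
        rw [← neg_sub (r^m) (r^N), ← neg_sub (1:ℝ) r, neg_div_neg_eq]
      rw [e1]
      calc (r^m - r^N)/(1-r) ≤ r^m/(1-r) := by
            apply div_le_div_of_nonneg_right ?_ hden.le |>.trans_eq rfl
            nlinarith [pow_pos hr0 N]
        _ ≤ r^m/(L/(2*(N:ℝ))) := by
            rw [div_le_div_iff₀ hden hLN2']
            exact mul_le_mul_of_nonneg_left h1r (pow_nonneg (le_of_lt hr0) m)
        _ = r^m * (2*(N:ℝ)/L) := by
            rw [div_div_eq_mul_div, mul_div_assoc]
    have hrm : r^m ≤ 2 * Real.exp (c*α) := by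
      have hrme : r^m = Real.exp (c * ((m:ℝ)/(N:ℝ))) := by
        rw [hrdef, ← Real.exp_nat_mul, hcdef]
        congr 1
        field_simp
      have h2 : c * ((m:ℝ)/(N:ℝ)) ≤ c*α + 1/2 := by
        have hm1 : α - 1/(N:ℝ) ≤ (m:ℝ)/(N:ℝ) := by
          rw [le_div_iff₀ hNR]
          have hinv : (1/(N:ℝ))*(N:ℝ) = 1 := by field_simp
          nlinarith [hmsucc, hinv]
        have h3 : c * ((m:ℝ)/(N:ℝ)) ≤ c * (α - 1/(N:ℝ)) :=
          mul_le_mul_of_nonpos_left hm1 (by rw [hcdef]; linarith)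
        have h4 : c * (α - 1/(N:ℝ)) = c*α + L/(N:ℝ) := by
          rw [hLdef]; ring
        rw [h4] at h3
        linarith [hLN]
      have hhalf : Real.exp ((1:ℝ)/2) ≤ 2 := by
        have hh : Real.exp ((1:ℝ)/2) ≤ Real.exp (Real.log 2) := by
          apply Real.exp_le_exp.2
          linarith [Real.log_two_gt_d9]
        rwa [Real.exp_log two_pos] at hh
      calc r^m = Real.exp (c * ((m:ℝ)/(N:ℝ))) := hrme
        _ ≤ Real.exp (c*α + 1/2) := Real.exp_le_exp.2 h2
        _ = Real.exp (c*α) * Real.exp (1/2) := by rw [← Real.exp_add]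
        _ ≤ Real.exp (c*α) * 2 :=
            mul_le_mul_of_nonneg_left hhalf (le_of_lt (Real.exp_pos _))
        _ = 2 * Real.exp (c*α) := by ring
    have hS2 : ∑ k ∈ Finset.Ico m N, |∫ x in ((k:ℝ)/(N:ℝ))..(((k:ℝ)+1)/(N:ℝ)), (f ((k:ℝ)/(N:ℝ)) - f x)|
        ≤ 2 * K * Real.exp (c*α) / (N:ℝ) := by
      calc _ ≤ ∑ k ∈ Finset.Ico m N, (K * L / (2 * (N:ℝ)^2)) * r^k :=
            Finset.sum_le_sum (fun k _ => hfine k)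
        _ = (K * L / (2 * (N:ℝ)^2)) * ∑ k ∈ Finset.Ico m N, r^k := by
            rw [Finset.mul_sum]
        _ ≤ (K * L / (2 * (N:ℝ)^2)) * (r^m * (2*(N:ℝ)/L)) :=
            mul_le_mul_of_nonneg_left hgeom (by positivity)
        _ ≤ (K * L / (2 * (N:ℝ)^2)) * ((2 * Real.exp (c*α)) * (2*(N:ℝ)/L)) := by
            apply mul_le_mul_of_nonneg_left _ (by positivity)
            apply mul_le_mul_of_nonneg_right hrm (by positivity)
        _ = 2 * K * Real.exp (c*α) / (N:ℝ) := by
            field_simp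
    have hmα : (m:ℝ)/(N:ℝ) ≤ α := by
      rw [div_le_iff₀ hNR]
      exact hmfloor
    have herr : |ropeC D θ0 lam - (1/2) * ∫ x in (0:ℝ)..1, f x|
        ≤ α + K * Real.exp (c*α) / (N:ℝ) := by
      rw [hdiff, abs_mul, abs_of_pos (by norm_num : (0:ℝ) < 1/2)]
      calc (1/2) * |∑ k ∈ Finset.range N,
            (∫ x in ((k:ℝ)/(N:ℝ))..(((k:ℝ)+1)/(N:ℝ)), (f ((k:ℝ)/(N:ℝ)) - f x))|
          ≤ (1/2) * ∑ k ∈ Finset.range N,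
            |∫ x in ((k:ℝ)/(N:ℝ))..(((k:ℝ)+1)/(N:ℝ)), (f ((k:ℝ)/(N:ℝ)) - f x)| :=
            mul_le_mul_of_nonneg_left (Finset.abs_sum_le_sum_abs _ _) (by norm_num)
        _ ≤ (1/2) * ((m:ℝ) * (2/(N:ℝ)) + 2 * K * Real.exp (c*α) / (N:ℝ)) := by
            apply mul_le_mul_of_nonneg_left _ (by norm_num)
            rw [hsplit]
            exact add_le_add hS1 hS2
        _ = (m:ℝ)/(N:ℝ) + K * Real.exp (c*α) / (N:ℝ) := by ring
        _ ≤ α + K * Real.exp (c*α) / (N:ℝ) := add_le_add_left hmα _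
    have hKN : K * Real.exp (c*α) / (N:ℝ) = 4 * Real.pi * lam * Real.exp (c*α) / (D:ℝ) := by
      rw [hDR, hKdef]
      field_simp
      ring
    have hosc2 : (1/2) * |∫ x in (0:ℝ)..1, f x| ≤ 2 / (Real.pi * lam * θ0 * L) := by
      have hexpL : Real.exp L = θ0⁻¹ := by
        rw [hLdef, hcdef, Real.exp_neg, Real.exp_log hθp]
      have h1 : (1/2) * (3 * Real.exp L / (K*L)) = 3/(2*K*L*θ0) := by
        rw [hexpL]
        field_simp
      calc (1/2) * |∫ x in (0:ℝ)..1, f x| ≤ (1/2) * (3 * Real.exp L / (K*L)) :=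
            mul_le_mul_of_nonneg_left hosc (by norm_num)
        _ = 3/(2*K*L*θ0) := h1
        _ ≤ 2 / (Real.pi * lam * θ0 * L) := by
            rw [div_le_div_iff₀ (by positivity) (by positivity), hKdef]
            nlinarith [mul_pos (mul_pos (mul_pos hpi hlam0) hθp) hLpos]
    calc |ropeC D θ0 lam|
        = |(ropeC D θ0 lam - (1/2) * ∫ x in (0:ℝ)..1, f x) + (1/2) * ∫ x in (0:ℝ)..1, f x| := by
          congr 1; ring
      _ ≤ |ropeC D θ0 lam - (1/2) * ∫ x in (0:ℝ)..1, f x| + |(1/2) * ∫ x in (0:ℝ)..1, f x| :=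
          abs_add_le _ _
      _ ≤ (α + K * Real.exp (c*α) / (N:ℝ)) + 2 / (Real.pi * lam * θ0 * L) := by
          apply add_le_add herr
          rw [abs_mul, abs_of_pos (by norm_num : (0:ℝ) < 1/2)]
          exact hosc2
      _ ≤ 2 / (Real.pi * lam * θ0 * L) + (α + 4 * Real.pi * lam * Real.exp (c * α) / D) := by
          linarith [hKN]
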